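/- arXiv:0802.1279 — 3 statements merged into one kernel-verified Lean document; each statement's English description precedes it below -/
import Mathlib

section
/- Let u = x_1^{a_1}···x_n^{a_n} with a_1 > 0 and v = x_1^{b_1}···x_n^{b_n} be monomials of degree d with u ≥_lex v, and suppose I = (L(u,v)) is a completely lexsegment ideal satisfying one of the following conditions (which characterize having a linear resolution): (a) u = x_1^a x_2^{d-a} and v = x_1^a x_n^{d-a} for some 0 < a ≤ d; (b) b_1 < a_1 − 1; (c) b_1 = a_1 − 1 and, for the lex-largest monomial w of degree d with w <_lex v, one has x_1·w/x_{max(w)} ≤_lex u. Then I has linear quotients with respect to the ordering of its minimal generators L(u,v) = {w_1, …, w_r} where w_1 ≺ w_2 ≺ … ≺ w_r. -/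
open MvPolynomial

/-- Exponent vectors of monomials in `n` variables; index `i` corresponds to the variable
`x_{i+1}`, so that the `toLex` order on exponent vectors is the lexicographic order on
monomials with `x_1 > x_2 > ⋯ > x_n`. -/
abbrev Mon (n : ℕ) := Fin n →₀ ℕ

/-- The degree of a monomial. -/
def monDeg {n : ℕ} (m : Mon n) : ℕ := ∑ i, m i

/-- The lexsegment `L(u,v)`: monomials of degree `d` with `u ≥_lex w ≥_lex v`. -/
def lexSeg {n : ℕ} (d : ℕ) (u v : Mon n) : Set (Mon n) :=
  {w | monDeg w = d ∧ toLex v ≤ toLex w ∧ toLex w ≤ toLex u}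

/-- The monomial ideal generated by a set of monomials. -/
noncomputable def monomialIdeal {n : ℕ} (k : Type*) [Field k] (T : Set (Mon n)) :
    Ideal (MvPolynomial (Fin n) k) :=
  Ideal.span ((fun m => (monomial m (1 : k) : MvPolynomial (Fin n) k)) '' T)

/-- The order `≺` on monomials of a fixed degree: `w ≺ w'` iff `ν₁(w) < ν₁(w')`, or
`ν₁(w) = ν₁(w')` and `w >_lex w'`. -/
def prec {n : ℕ} [NeZero n] (z w : Mon n) : Prop :=
  z 0 < w 0 ∨ (z 0 = w 0 ∧ toLex w < toLex z)

/-- A set `T` of monomials, totally ordered by a relation `r`, generates an ideal with linear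
quotients with respect to `r` if for every `w ∈ T` the colon ideal of the ideal generated by
the earlier monomials `{z ∈ T | r z w}` by `w` is generated by a subset of the variables. -/
noncomputable def hasLinearQuotientsWrt {n : ℕ} (k : Type*) [Field k] (T : Set (Mon n))
    (r : Mon n → Mon n → Prop) : Prop :=
  ∀ w ∈ T, ∃ V : Set (Fin n),
    Submodule.colon (monomialIdeal k {z ∈ T | r z w})
        (Ideal.span {(monomial w (1 : k) : MvPolynomial (Fin n) k)}) =
      Ideal.span ((fun i => (X i : MvPolynomial (Fin n) k)) '' V)

/-- `max(m)`: the largest index of a variable dividing the monomial `m`. -/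
def maxVar {n : ℕ} [NeZero n] (m : Mon n) : Fin n := WithBot.unbotD 0 m.support.max

/-- The shadow of a set of monomials. -/
def shad {n : ℕ} (T : Set (Mon n)) : Set (Mon n) :=
  {m | ∃ t ∈ T, ∃ i : Fin n, m = t + Finsupp.single i 1}

/-- A set of monomials is a lexsegment if it is of the form `L(u,v)`. -/
def IsLexSegSet {n : ℕ} (T : Set (Mon n)) : Prop :=
  ∃ (e : ℕ) (u v : Mon n), monDeg u = e ∧ monDeg v = e ∧ toLex v ≤ toLex u ∧ T = lexSeg e u v

/-- A lexsegment is a completely lexsegment if all its iterated shadows are lexsegments. -/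
def IsCompletelyLexSeg {n : ℕ} (T : Set (Mon n)) : Prop :=
  ∀ j : ℕ, IsLexSegSet (shad^[j] T)

/-- `set(w)` for `w ∈ L(u,v)`: the set of `s` with `x_s · w ∈ I_{≺ w}`, where `I_{≺ w}` is the
ideal generated by `{z ∈ L(u,v) | z ≺ w}`. -/
noncomputable def setW {n : ℕ} [NeZero n] (k : Type*) [Field k] (d : ℕ) (u v : Mon n)
    (w : Mon n) : Set (Fin n) :=
  {s | (monomial (w + Finsupp.single s 1) (1 : k) : MvPolynomial (Fin n) k) ∈
    monomialIdeal k {z ∈ lexSeg d u v | prec z w}}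

/-- `g` is the value of the decomposition function of `I = (L(u,v))` at the monomial `m`:
`g` is the `≺`-smallest `w' ∈ L(u,v)` such that `m ∈ I_{⪯ w'}`. -/
noncomputable def isDecompOf {n : ℕ} [NeZero n] (k : Type*) [Field k] (d : ℕ) (u v : Mon n)
    (m : Mon n) (g : Mon n) : Prop :=
  g ∈ lexSeg d u v ∧
  (monomial m (1 : k) : MvPolynomial (Fin n) k) ∈
      monomialIdeal k {z ∈ lexSeg d u v | prec z g ∨ z = g} ∧
  ∀ w' ∈ lexSeg d u v,
    (monomial m (1 : k) : MvPolynomial (Fin n) k) ∈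
        monomialIdeal k {z ∈ lexSeg d u v | prec z w' ∨ z = w'} →
      g = w' ∨ prec g w'

/-- Reversing the variables: the `toLex` order on `revMon` exponent vectors is the
lexicographic order induced by `x_n > x_{n-1} > ⋯ > x_1`. -/
def revMon {n : ℕ} (m : Mon n) : Mon n := Finsupp.equivMapDomain Fin.revPerm m

/-- The depth of `S/I` with respect to the graded maximal ideal `(x_1, …, x_n)`:
the maximal length of an `S/I`-regular sequence of elements of `(x_1, …, x_n)`. -/
noncomputable def ringDepth {n : ℕ} {k : Type*} [Field k]
    (I : Ideal (MvPolynomial (Fin n) k)) : ℕ :=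
  sSup {r : ℕ | ∃ rs : List (MvPolynomial (Fin n) k), rs.length = r ∧
    (∀ x ∈ rs, x ∈ Ideal.span (Set.range (X : Fin n → MvPolynomial (Fin n) k))) ∧
    RingTheory.Sequence.IsRegular (MvPolynomial (Fin n) k ⧸ I) rs}

/-!
Linear quotients of a monomial ideal amount to an exchange property: for `z ≺ w` in `L(u,v)`
there must be a variable `x_t` dividing `z / gcd(z, w)` and some `z' ≺ w` in `L(u,v)` dividing
`x_t w`. Take `t` to be the first index at which `z` exceeds `w`. The two candidates for `z'` are
`x_t w / x_{max(w)}` (same `ν₁`, lex-larger than `w`) and `x_t w / x_1` (smaller `ν₁`). The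
first one lies in `L(u,v)` unless `ν₁(w) = ν₁(u)`; the second one does whenever no variable
after `x_t` divides `w`, because it is then lex-above `z`. In the remaining case, `w` in the top
slice of `L(u,v)`, each condition keeps one candidate in the segment: in (a) `u` is the
lex-largest monomial of its slice, in (b) `x_t w / x_1` still has `ν₁ > ν₁(v)`, and in (c)
`x_t w / x_{max(w)}` is the image of `x_t w / x_1 <_lex v` under the lex-monotone map
`m ↦ x_1 m / x_{max(m)}`, hence is bounded by its image at the predecessor of `v`.
-/

section LinearQuotients

variable {n : ℕ}

theorem hasLinearQuotientsWrt_of_exchange (k : Type*) [Field k] {T : Set (Mon n)}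
    {r : Mon n → Mon n → Prop}
    (h : ∀ w ∈ T, ∀ z ∈ T, r z w →
      ∃ t, w t < z t ∧ ∃ z' ∈ T, r z' w ∧ z' ≤ w + Finsupp.single t 1) :
    hasLinearQuotientsWrt k T r := by
  classical
  intro w hw
  refine ⟨{t | ∃ z' ∈ T, r z' w ∧ z' ≤ w + Finsupp.single t 1}, le_antisymm ?_ ?_⟩
  · intro f hf
    rw [Ideal.mem_colon_span_singleton, monomialIdeal, mem_ideal_span_monomial_image] at hf
    rw [mem_ideal_span_X_image]
    intro m hm
    obtain ⟨z, ⟨hzT, hzw⟩, hzle⟩ := hf (m + w) (by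
      rwa [mem_support_iff, coeff_mul_monomial, mul_one, ← mem_support_iff])
    obtain ⟨t, hwz, hex⟩ := h w hw z hzT hzw
    have hzt := hzle t
    simp only [Finsupp.add_apply] at hzt
    exact ⟨t, hex, by omega⟩
  · rw [Ideal.span_le]
    rintro _ ⟨t, ⟨z', hz'T, hz'w, hz'le⟩, rfl⟩
    rw [SetLike.mem_coe, Ideal.mem_colon_span_singleton]
    beta_reduce
    rw [← pow_one (X t), ← monomial_single_add, monomialIdeal, mem_ideal_span_monomial_image]
    intro m hm
    rw [support_monomial, if_neg one_ne_zero, Finset.mem_singleton] at hm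
    exact ⟨z', ⟨hz'T, hz'w⟩, hm ▸ add_comm w _ ▸ hz'le⟩

end LinearQuotients

section LexOrder

variable {n : ℕ}

theorem toLex_lt_iff {a b : Mon n} :
    toLex a < toLex b ↔ ∃ i, (∀ j, j < i → a j = b j) ∧ a i < b i :=
  Finsupp.lex_def

theorem monDeg_add (a b : Mon n) : monDeg (a + b) = monDeg a + monDeg b := by
  simp [monDeg, Finset.sum_add_distrib]

theorem monDeg_single (i : Fin n) (c : ℕ) : monDeg (Finsupp.single i c) = c := by
  simp [monDeg, Finsupp.single_apply]

theorem monDeg_lt_of_eq_of_lt_of_eq_zero {a b : Mon n} {q : Fin n}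
    (hag : ∀ j, j < q → a j = b j) (hq : a q < b q) (hzero : ∀ j, q < j → a j = 0) :
    monDeg a < monDeg b := by
  refine Finset.sum_lt_sum (fun j _ => ?_) ⟨q, Finset.mem_univ q, hq⟩
  rcases lt_trichotomy j q with hj | rfl | hj
  · exact (hag j hj).le
  · exact hq.le
  · simp [hzero j hj]

theorem toLex_le_of_le_of_eq_zero {a b : Mon n} (P : Fin n) (hle : ∀ j, j < P → a j ≤ b j)
    (hzero : ∀ j, P < j → b j = 0) (hdeg : monDeg a = monDeg b) : toLex a ≤ toLex b := by
  by_contra! hlt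
  obtain ⟨q, hag, hq⟩ := toLex_lt_iff.1 hlt
  have hPq : P ≤ q := not_lt.1 fun hqP => (hle q hqP).not_gt hq
  exact (monDeg_lt_of_eq_of_lt_of_eq_zero hag hq
    fun j hj => hzero j (hPq.trans_lt hj)).ne hdeg.symm

theorem exists_lt_forall_le_of_ne {z w : Mon n} (hne : z ≠ w) (hdeg : monDeg z = monDeg w) :
    ∃ t, w t < z t ∧ ∀ j, j < t → z j ≤ w j := by
  have hex : ∃ t, w t < z t := by
    by_contra! hle
    refine hne (Finsupp.ext fun j => ?_)
    exact ((Finset.sum_eq_sum_iff_of_le fun i _ => hle i).1 hdeg j (Finset.mem_univ j))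
  obtain ⟨t, ht, hmin⟩ := wellFounded_lt.has_min {t | w t < z t} hex
  exact ⟨t, ht, fun j hj => not_lt.1 fun h => hmin j h hj⟩

theorem exists_greatest_toLex_lt {y v : Mon n} (hyv : toLex y < toLex v) :
    ∃ w, monDeg w = monDeg y ∧ toLex w < toLex v ∧
      ∀ w', monDeg w' = monDeg y → toLex w' < toLex v → toLex w' ≤ toLex w := by
  obtain ⟨w, ⟨hwd, hwv⟩, hmax⟩ := Set.exists_max_image
    {m : Mon n | monDeg m = monDeg y ∧ toLex m < toLex v} toLex
    ((Finsupp.finite_of_degree_eq (monDeg y)).subset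
      fun m hm => (Finsupp.degree_eq_sum m).trans hm.1) ⟨y, rfl, hyv⟩
  exact ⟨w, hwd, hwv, fun w' h1 h2 => hmax w' ⟨h1, h2⟩⟩

end LexOrder

section ReplaceVar

variable {n : ℕ}

/-- The monomial `x_j · m / x_i` (truncated: it is `x_j · m` when `x_i ∤ m`). -/
noncomputable def replaceVar (m : Mon n) (i j : Fin n) : Mon n :=
  m + Finsupp.single j 1 - Finsupp.single i 1

theorem replaceVar_apply (m : Mon n) (i j l : Fin n) :
    replaceVar m i j l = m l + (if j = l then 1 else 0) - (if i = l then 1 else 0) := by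
  simp [replaceVar, Finsupp.single_apply]

theorem replaceVar_apply_of_ne (m : Mon n) {i j l : Fin n} (hi : l ≠ i) (hj : l ≠ j) :
    replaceVar m i j l = m l := by
  simp [replaceVar_apply, hi.symm, hj.symm]

theorem replaceVar_apply_left (m : Mon n) {i j : Fin n} (hij : i ≠ j) :
    replaceVar m i j i = m i - 1 := by
  simp [replaceVar_apply, hij.symm]

theorem replaceVar_apply_right (m : Mon n) {i j : Fin n} (hij : i ≠ j) :
    replaceVar m i j j = m j + 1 := by
  simp [replaceVar_apply, hij]

theorem replaceVar_le (m : Mon n) (i j : Fin n) : replaceVar m i j ≤ m + Finsupp.single j 1 :=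
  tsub_le_self

theorem monDeg_replaceVar {m : Mon n} {i : Fin n} (j : Fin n) (hi : 0 < m i) :
    monDeg (replaceVar m i j) = monDeg m := by
  have h : replaceVar m i j + Finsupp.single i 1 = m + Finsupp.single j 1 :=
    tsub_add_cancel_of_le (Finsupp.single_le_iff.2 (by simp; omega))
  have := congrArg monDeg h
  rw [monDeg_add, monDeg_add, monDeg_single, monDeg_single] at this
  omega

theorem replaceVar_replaceVar_cancel {m : Mon n} {i : Fin n} (j t : Fin n) (hi : 0 < m i) :
    replaceVar (replaceVar m i t) j i = replaceVar m j t := by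
  ext l
  simp only [replaceVar_apply]
  by_cases hl : i = l
  · subst hl; split_ifs <;> omega
  · simp [hl]

theorem toLex_lt_replaceVar (m : Mon n) {i j : Fin n} (hji : j < i) :
    toLex m < toLex (replaceVar m i j) :=
  toLex_lt_iff.2 ⟨j, fun l hl => (replaceVar_apply_of_ne m (hl.trans hji).ne hl.ne).symm,
    by rw [replaceVar_apply_right m hji.ne']; omega⟩

theorem replaceVar_mem_lexSeg_of_lt {d : ℕ} {u v w : Mon n} {i t : Fin n}
    (hw : w ∈ lexSeg d u v) (hi : 0 < w i) (hti : t < i)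
    (hu : toLex (replaceVar w i t) ≤ toLex u) :
    replaceVar w i t ∈ lexSeg d u v :=
  ⟨(monDeg_replaceVar t hi).trans hw.1, hw.2.1.trans (toLex_lt_replaceVar w hti).le, hu⟩

end ReplaceVar

section FirstVariable

variable {n : ℕ} [NeZero n]

theorem toLex_lt_of_apply_zero_lt {a b : Mon n} (h : a 0 < b 0) : toLex a < toLex b :=
  toLex_lt_iff.2 ⟨0, fun j hj => absurd hj (Fin.zero_le j).not_gt, h⟩

theorem apply_zero_le_of_toLex_le {a b : Mon n} (h : toLex a ≤ toLex b) : a 0 ≤ b 0 :=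
  not_lt.1 fun h' => (toLex_lt_of_apply_zero_lt h').not_ge h

theorem le_maxVar {m : Mon n} {j : Fin n} (h : 0 < m j) : j ≤ maxVar m := by
  have hj : j ∈ m.support := Finsupp.mem_support_iff.2 h.ne'
  obtain ⟨b, hb⟩ := Finset.max_of_mem hj
  simpa [maxVar, hb] using Finset.le_max_of_eq hj hb

theorem apply_maxVar_pos {m : Mon n} (h : m ≠ 0) : 0 < m (maxVar m) := by
  obtain ⟨b, hb⟩ := Finset.max_of_nonempty (Finsupp.support_nonempty_iff.2 h)
  simpa [maxVar, hb, Nat.pos_iff_ne_zero] using Finset.mem_of_max hb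

theorem apply_eq_zero_of_maxVar_lt {m : Mon n} {j : Fin n} (h : maxVar m < j) : m j = 0 :=
  Nat.eq_zero_of_not_pos fun hj => (le_maxVar hj).not_gt h

theorem maxVar_eq {m : Mon n} {P : Fin n} (hP : 0 < m P) (h : ∀ j, P < j → m j = 0) :
    maxVar m = P :=
  le_antisymm (not_lt.1 fun hlt => (apply_maxVar_pos (fun h0 => by simp [h0] at hP)).ne'
    (h _ hlt)) (le_maxVar hP)

theorem ne_zero_of_lt_maxVar {m : Mon n} {t : Fin n} (h : t < maxVar m) : m ≠ 0 := by
  rintro rfl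
  exact (Fin.zero_le t).not_gt h

theorem prec.apply_zero_le {z w : Mon n} (h : prec z w) : z 0 ≤ w 0 := by
  rcases h with h | ⟨h, -⟩ <;> omega

theorem prec.ne {z w : Mon n} (h : prec z w) : z ≠ w := by
  rintro rfl
  rcases h with h | ⟨-, h⟩ <;> exact lt_irrefl _ h

theorem prec_replaceVar_of_lt (w : Mon n) {i t : Fin n} (ht : t ≠ 0) (hti : t < i) :
    prec (replaceVar w i t) w :=
  Or.inr ⟨replaceVar_apply_of_ne w ((Fin.zero_le t).trans_lt hti).ne ht.symm,
    toLex_lt_replaceVar w hti⟩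

theorem prec_replaceVar_zero {w : Mon n} {t : Fin n} (ht : t ≠ 0) (h0 : 0 < w 0) :
    prec (replaceVar w 0 t) w :=
  Or.inl (by rw [replaceVar_apply_left w ht.symm]; omega)

end FirstVariable

section LexSegment

variable {n : ℕ} [NeZero n] {d : ℕ} {u v : Mon n}

theorem replaceVar_zero_mem_lexSeg {w : Mon n} {t : Fin n} (hw : w ∈ lexSeg d u v)
    (h0 : 0 < w 0) (ht : t ≠ 0) (hv : toLex v ≤ toLex (replaceVar w 0 t)) :
    replaceVar w 0 t ∈ lexSeg d u v :=
  ⟨(monDeg_replaceVar t h0).trans hw.1, hv,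
    (toLex_lt_of_apply_zero_lt (by rw [replaceVar_apply_left w ht.symm]; omega)).le.trans hw.2.2⟩

theorem apply_zero_lt_of_prec_of_eq_zero {z w : Mon n} {t : Fin n}
    (hdeg : monDeg z = monDeg w) (hzw : prec z w) (hmin : ∀ j, j < t → z j ≤ w j)
    (hzero : ∀ j, t < j → w j = 0) : z 0 < w 0 :=
  hzw.resolve_right fun ⟨_, hlt⟩ => (toLex_le_of_le_of_eq_zero t hmin hzero hdeg).not_gt hlt

theorem toLex_le_replaceVar_zero {z w : Mon n} {t : Fin n} (hdeg : monDeg z = monDeg w)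
    (h0 : z 0 < w 0) (ht : t ≠ 0) (hmin : ∀ j, j < t → z j ≤ w j)
    (hzero : ∀ j, t < j → w j = 0) : toLex z ≤ toLex (replaceVar w 0 t) := by
  refine toLex_le_of_le_of_eq_zero t (fun j hj => ?_) (fun j hj => ?_)
    (hdeg.trans (monDeg_replaceVar t (by omega)).symm)
  · rcases eq_or_ne j 0 with rfl | hj0
    · rw [replaceVar_apply_left w ht.symm]; omega
    · rw [replaceVar_apply_of_ne w hj0 hj.ne]; exact hmin j hj
  · rw [replaceVar_apply_of_ne w ((Fin.zero_le t).trans_lt hj).ne' hj.ne', hzero j hj]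

def TopSliceExchange (d : ℕ) (u v : Mon n) : Prop :=
  ∀ w ∈ lexSeg d u v, w 0 = u 0 → ∀ t : Fin n, t ≠ 0 → t < maxVar w →
    toLex (replaceVar w (maxVar w) t) ≤ toLex u ∨ toLex v ≤ toLex (replaceVar w 0 t)

theorem exists_exchange_of_topSliceExchange (hu0 : 0 < u 0) (hT : TopSliceExchange d u v)
    {z w : Mon n} (hz : z ∈ lexSeg d u v) (hw : w ∈ lexSeg d u v) (hzw : prec z w) :
    ∃ t, w t < z t ∧ ∃ z' ∈ lexSeg d u v, prec z' w ∧ z' ≤ w + Finsupp.single t 1 := by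
  have hdeg : monDeg z = monDeg w := hz.1.trans hw.1.symm
  obtain ⟨t, hwz, hmin⟩ := exists_lt_forall_le_of_ne hzw.ne hdeg
  have ht0 : t ≠ 0 := by
    rintro rfl
    exact hzw.apply_zero_le.not_gt hwz
  have down : 0 < w 0 → toLex v ≤ toLex (replaceVar w 0 t) →
      ∃ z' ∈ lexSeg d u v, prec z' w ∧ z' ≤ w + Finsupp.single t 1 := fun h0 hv =>
    ⟨_, replaceVar_zero_mem_lexSeg hw h0 ht0 hv, prec_replaceVar_zero ht0 h0,
      replaceVar_le w 0 t⟩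
  refine ⟨t, hwz, ?_⟩
  by_cases htM : t < maxVar w
  · have hM := apply_maxVar_pos (ne_zero_of_lt_maxVar htM)
    have up : toLex (replaceVar w (maxVar w) t) ≤ toLex u →
        ∃ z' ∈ lexSeg d u v, prec z' w ∧ z' ≤ w + Finsupp.single t 1 := fun hu =>
      ⟨_, replaceVar_mem_lexSeg_of_lt hw hM htM hu, prec_replaceVar_of_lt w ht0 htM,
        replaceVar_le w _ t⟩
    rcases (apply_zero_le_of_toLex_le hw.2.2).lt_or_eq with hlt | heq
    · refine up (toLex_lt_of_apply_zero_lt ?_).le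
      rwa [replaceVar_apply_of_ne w ((Fin.zero_le t).trans_lt htM).ne ht0.symm]
    · exact (hT w hw heq t ht0 htM).elim up (down (heq ▸ hu0))
  · have hzero : ∀ j, t < j → w j = 0 := fun j hj =>
      apply_eq_zero_of_maxVar_lt ((not_lt.1 htM).trans_lt hj)
    have h0 := apply_zero_lt_of_prec_of_eq_zero hdeg hzw hmin hzero
    exact down (by omega) (hz.2.1.trans (toLex_le_replaceVar_zero hdeg h0 ht0 hmin hzero))

end LexSegment

section Conditions

variable {n : ℕ} [NeZero n] {d : ℕ} {u v : Mon n}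

theorem topSliceExchange_of_eq_single_add_single {a : ℕ} {i : Fin n} (hi : (i : ℕ) = 1)
    (had : a ≤ d) :
    TopSliceExchange d (Finsupp.single 0 a + Finsupp.single i (d - a)) v := by
  intro w hw hw0 t ht0 htM
  left
  have hM0 : maxVar w ≠ 0 := ((Fin.zero_le t).trans_lt htM).ne'
  refine toLex_le_of_le_of_eq_zero i (fun j hj => ?_) (fun j hj => ?_) ?_
  · obtain rfl : j = 0 := Fin.val_eq_zero_iff.1 (by rw [Fin.lt_def] at hj; omega)
    rw [replaceVar_apply_of_ne w hM0.symm ht0.symm, hw0]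
  · have hj0 : j ≠ 0 := ((Fin.zero_le i).trans_lt hj).ne'
    simp [hj0.symm, hj.ne]
  · rw [monDeg_replaceVar t (apply_maxVar_pos (ne_zero_of_lt_maxVar htM)), hw.1, monDeg_add,
      monDeg_single, monDeg_single]
    omega

theorem topSliceExchange_of_apply_zero_add_one_lt (h : v 0 + 1 < u 0) : TopSliceExchange d u v :=
  fun w _ hw0 t ht0 _ =>
    Or.inr (toLex_lt_of_apply_zero_lt (by rw [replaceVar_apply_left w ht0.symm]; omega)).le

theorem toLex_replaceVar_maxVar_zero_le {m m' : Mon n} (hdeg : monDeg m = monDeg m')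
    (hle : toLex m ≤ toLex m') :
    toLex (replaceVar m (maxVar m) 0) ≤ toLex (replaceVar m' (maxVar m') 0) := by
  rcases hle.eq_or_lt with h | hlt
  · rw [toLex_inj.1 h]
  obtain ⟨p, hag, hp⟩ := toLex_lt_iff.1 hlt
  have hpP : p ≤ maxVar m' := le_maxVar (by omega)
  have hpM : p ≤ maxVar m := not_lt.1 fun hMp => (monDeg_lt_of_eq_of_lt_of_eq_zero hag hp
    fun j hj => apply_eq_zero_of_maxVar_lt (hMp.trans hj)).ne hdeg
  have hm' : m' ≠ 0 := fun h => by simp [h] at hp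
  have hm : m ≠ 0 := by
    rintro rfl
    have hsum : m' p ≤ monDeg m' :=
      Finset.single_le_sum (fun j _ => Nat.zero_le (m' j)) (Finset.mem_univ p)
    have h0 : monDeg (0 : Mon n) = 0 := by simp [monDeg]
    omega
  have hagree : ∀ j, j < p →
      replaceVar m (maxVar m) 0 j = replaceVar m' (maxVar m') 0 j := fun j hj => by
    simp [replaceVar_apply, (hj.trans_le hpM).ne', (hj.trans_le hpP).ne', hag j hj]
  rcases hpP.lt_or_eq with hpP' | hpP'
  · refine (toLex_lt_iff.2 ⟨p, hagree, ?_⟩).le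
    simp only [replaceVar_apply, if_neg hpP'.ne']
    split_ifs <;> omega
  · refine toLex_le_of_le_of_eq_zero p (fun j hj => (hagree j hj).le) (fun j hj => ?_) ?_
    · rw [replaceVar_apply_of_ne m' (hpP' ▸ hj).ne' ((Fin.zero_le p).trans_lt hj).ne',
        apply_eq_zero_of_maxVar_lt (hpP' ▸ hj)]
    · rw [monDeg_replaceVar 0 (apply_maxVar_pos hm), monDeg_replaceVar 0 (apply_maxVar_pos hm'),
        hdeg]

theorem topSliceExchange_of_predecessor (hu0 : 0 < u 0)
    (h : ∀ w : Mon n, monDeg w = d → toLex w < toLex v →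
      (∀ w' : Mon n, monDeg w' = d → toLex w' < toLex v → toLex w' ≤ toLex w) →
      toLex (w + Finsupp.single 0 1 - Finsupp.single (maxVar w) 1) ≤ toLex u) :
    TopSliceExchange d u v := by
  intro w hw hw0 t ht0 htM
  rcases le_or_gt (toLex v) (toLex (replaceVar w 0 t)) with hvy | hyv
  · exact Or.inr hvy
  left
  have h0 : 0 < w 0 := hw0 ▸ hu0
  have hM0 : maxVar w ≠ 0 := ((Fin.zero_le t).trans_lt htM).ne'
  have hy : monDeg (replaceVar w 0 t) = d := (monDeg_replaceVar t h0).trans hw.1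
  have hmaxy : maxVar (replaceVar w 0 t) = maxVar w := by
    refine maxVar_eq ?_ fun j hj => ?_
    · rw [replaceVar_apply_of_ne w hM0 htM.ne']
      exact apply_maxVar_pos (ne_zero_of_lt_maxVar htM)
    · rw [replaceVar_apply_of_ne w ((Fin.zero_le _).trans_lt hj).ne' (htM.trans hj).ne',
        apply_eq_zero_of_maxVar_lt hj]
  obtain ⟨w', hw'd, hw'v, hw'max⟩ := exists_greatest_toLex_lt hyv
  rw [hy] at hw'd hw'max
  calc toLex (replaceVar w (maxVar w) t)
      = toLex (replaceVar (replaceVar w 0 t) (maxVar (replaceVar w 0 t)) 0) := by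
        rw [hmaxy, replaceVar_replaceVar_cancel _ _ h0]
    _ ≤ toLex (replaceVar w' (maxVar w') 0) :=
        toLex_replaceVar_maxVar_zero_le (hy.trans hw'd.symm) (hw'max _ hy hyv)
    _ ≤ toLex u := h w' hw'd hw'v hw'max

end Conditions

/-- A completely lexsegment ideal satisfying one of the three conditions (a), (b), (c)
characterizing linear resolution has linear quotients with respect to the order `≺`. -/
theorem completely_lexsegment_linear_resolution_implies_linear_quotients
    {n : ℕ} [NeZero n] (hn : 2 ≤ n) (k : Type*) [Field k] (d : ℕ)
    (u v : Mon n)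
    (ha1 : 0 < u 0)
    (habc :
      (∃ a : ℕ, 0 < a ∧ a ≤ d ∧
          u = Finsupp.single 0 a + Finsupp.single (⟨1, by omega⟩ : Fin n) (d - a) ∧
          v = Finsupp.single 0 a + Finsupp.single (⟨n - 1, by omega⟩ : Fin n) (d - a)) ∨
      (v 0 + 1 < u 0) ∨
      (v 0 + 1 = u 0 ∧ ∀ w : Mon n, monDeg w = d → toLex w < toLex v →
        (∀ w' : Mon n, monDeg w' = d → toLex w' < toLex v → toLex w' ≤ toLex w) →
        toLex (w + Finsupp.single 0 1 - Finsupp.single (maxVar w) 1) ≤ toLex u)) :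
    hasLinearQuotientsWrt k (lexSeg d u v) prec := by
  have hT : TopSliceExchange d u v := by
    rcases habc with ⟨a, -, had, hu, -⟩ | hb | ⟨-, hc⟩
    · exact hu ▸ topSliceExchange_of_eq_single_add_single rfl had
    · exact topSliceExchange_of_apply_zero_add_one_lt hb
    · exact topSliceExchange_of_predecessor ha1 hc
  exact hasLinearQuotientsWrt_of_exchange k fun w hw z hz hzw =>
    exists_exchange_of_topSliceExchange ha1 hT hz hw hzw
end

section
/- Let 2 ≤ l ≤ n−1, let u = x_1·x_{l+1}^{a_{l+1}}···x_n^{a_n} and v = x_l·x_n^{d-1} be monomials of degree d (this is the form of the ends of a lexsegment which is not a completely lexsegment but generates an ideal with linear resolution), and let I = (L(u,v)). Order the minimal generators of I as g_1, …, g_m, h_1, …, h_p, where g_1, …, g_m are the monomials of L(u,v) not divisible by x_1 arranged in decreasing lexicographic order (with x_1 > … > x_n), and h_1, …, h_p are the monomials of L(u,v) divisible by x_1 arranged in decreasing order with respect to the lexicographic order induced by x_n > x_{n-1} > … > x_1. Then I has linear quotients with respect to this ordering. -/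
/-!
For `z` before `w` it is enough to find a variable `x_s` dividing `z / gcd(z, w)` and a
generator `z'` before `w` with `z' ∣ x_s w`: then the colon ideals are generated by such
variables. The generator `z'` is always an exchange `x_s w / x_j`, where the existence of `j`
comes from `deg z = deg w`.

* Neither is divisible by `x_1`: `s` is the first index where `z` exceeds `w`; then `j > s`, so
  `z' >_lex w`, and `z' <_lex u` as `x_1 ∤ z'`.
* Only `w` is: `u` forces `w = x_1 m` with `m` in `x_{l+1}, …, x_n`, while `z ≥_lex v` forces some
  `x_s ∣ z` with `2 ≤ s ≤ l`; take `j = 1`. Then `z' ≥_lex v`, being divisible by `x_s`.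
* Both are: `u` forces `ν₁(w) = ν₁(z) = 1`; `s` is the last index where `z` exceeds `w`, so
  `1 < j < s`, and `z'` stays divisible by `x_1`, hence above `v`, while `z' <_lex w ≤_lex u`.
-/

open MvPolynomial

/-- The ordering of the generators used for non-completely lexsegment ideals with linear
resolution: first the generators not divisible by `x_1`, in decreasing lexicographic order
(`x_1 > ⋯ > x_n`), then the generators divisible by `x_1`, in decreasing order with respect
to the lexicographic order induced by `x_n > x_{n-1} > ⋯ > x_1`. -/
def precNC {n : ℕ} [NeZero n] (z w : Mon n) : Prop :=
  (z 0 = 0 ∧ 0 < w 0) ∨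
  (z 0 = 0 ∧ w 0 = 0 ∧ toLex w < toLex z) ∨
  (0 < z 0 ∧ 0 < w 0 ∧ toLex (revMon w) < toLex (revMon z))

namespace LexSegment

open Finsupp

variable {n : ℕ}

/-- `x_s` divides `z / gcd(z, w)` and lies in the colon ideal `(z' ∈ T | r z' w) : w`,
because `z' ∣ x_s w`. -/
def LinearQuotientWitness (T : Set (Mon n)) (r : Mon n → Mon n → Prop) (z w : Mon n) : Prop :=
  ∃ s, w s < z s ∧ ∃ z' ∈ T, r z' w ∧ z' ≤ w + single s 1

theorem hasLinearQuotientsWrt_of_witness (k : Type*) [Field k] {T : Set (Mon n)}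
    {r : Mon n → Mon n → Prop} (h : ∀ w ∈ T, ∀ z ∈ T, r z w → LinearQuotientWitness T r z w) :
    hasLinearQuotientsWrt k T r := by
  intro w hw
  refine ⟨{s | ∃ z' ∈ T, r z' w ∧ z' ≤ w + single s 1}, le_antisymm ?_ ?_⟩
  · intro f hf
    rw [Submodule.mem_colon_span_singleton, smul_eq_mul, monomialIdeal,
      mem_ideal_span_monomial_image] at hf
    rw [mem_ideal_span_X_image]
    intro m hm
    obtain ⟨z, ⟨hzT, hzw⟩, hzle⟩ := hf (m + w) (by
      rwa [MvPolynomial.mem_support_iff, coeff_mul_monomial, mul_one,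
        ← MvPolynomial.mem_support_iff])
    obtain ⟨s, hs, hz'⟩ := h w hw z hzT hzw
    have hzs := hzle s
    simp only [Finsupp.coe_add, Pi.add_apply] at hzs
    exact ⟨s, hz', by omega⟩
  · rw [Ideal.span_le]
    rintro _ ⟨s, ⟨z', hz'T, hz'w, hz'le⟩, rfl⟩
    have hmul : (X s : MvPolynomial (Fin n) k) * monomial w 1 =
        monomial (w + single s 1 - z') 1 * monomial z' 1 := by
      rw [monomial_mul, tsub_add_cancel_of_le hz'le, mul_one, add_comm, monomial_single_add,
        pow_one]
    rw [SetLike.mem_coe, Submodule.mem_colon_span_singleton, smul_eq_mul, hmul]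
    exact Ideal.mul_mem_left _ _ (Ideal.subset_span ⟨z', ⟨hz'T, hz'w⟩, rfl⟩)

theorem monDeg_add (a b : Mon n) : monDeg (a + b) = monDeg a + monDeg b := by
  simp [monDeg, Finset.sum_add_distrib]

theorem monDeg_single (i : Fin n) (c : ℕ) : monDeg (single i c) = c := by
  simp [monDeg, single_apply]

theorem exists_lt_apply_of_monDeg_eq {a b : Mon n} (hab : monDeg a = monDeg b) {s : Fin n}
    (hs : a s < b s) : ∃ j, b j < a j := by
  by_contra! h
  exact (Finset.sum_lt_sum (fun j _ => h j) ⟨s, Finset.mem_univ _, hs⟩).ne hab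

theorem exchange_add_single {w : Mon n} {j : Fin n} (hj : w j ≠ 0) (s : Fin n) :
    w - single j 1 + single s 1 + single j 1 = w + single s 1 := by
  rw [add_right_comm, tsub_add_cancel_of_le (single_le_iff.2 (Nat.one_le_iff_ne_zero.2 hj))]

theorem monDeg_exchange {w : Mon n} {j : Fin n} (hj : w j ≠ 0) (s : Fin n) :
    monDeg (w - single j 1 + single s 1) = monDeg w := by
  have := congrArg monDeg (exchange_add_single hj s)
  simp only [monDeg_add, monDeg_single] at this ⊢
  omega

theorem exchange_le (w : Mon n) (j s : Fin n) : w - single j 1 + single s 1 ≤ w + single s 1 :=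
  add_le_add_left (tsub_le_self : w - single j 1 ≤ w) _

theorem lt_iff_lt_of_add_eq_add {α : Type*} [AddCommMonoid α] [PartialOrder α]
    [IsOrderedCancelAddMonoid α] {a b c e : α} (h : b + c = a + e) : a < b ↔ c < e := by
  rw [← add_lt_add_iff_right c, h, add_lt_add_iff_left]

theorem toLex_lt_exchange_iff {w : Mon n} {j s : Fin n} (hj : w j ≠ 0) :
    toLex w < toLex (w - single j 1 + single s 1) ↔ s < j := by
  rw [lt_iff_lt_of_add_eq_add (by rw [← toLex_add, ← toLex_add, exchange_add_single hj]),
    Lex.single_lt_iff]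

theorem toLex_exchange_lt_iff {w : Mon n} {j s : Fin n} (hj : w j ≠ 0) :
    toLex (w - single j 1 + single s 1) < toLex w ↔ j < s := by
  rw [lt_iff_lt_of_add_eq_add (by rw [← toLex_add, ← toLex_add, exchange_add_single hj]),
    Lex.single_lt_iff]

theorem toColex_lt_exchange_iff {w : Mon n} {j s : Fin n} (hj : w j ≠ 0) :
    toColex w < toColex (w - single j 1 + single s 1) ↔ j < s := by
  rw [lt_iff_lt_of_add_eq_add (by rw [← toColex_add, ← toColex_add, exchange_add_single hj]),
    Colex.single_lt_iff]

theorem toLex_revMon_lt_iff {a b : Mon n} :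
    toLex (revMon a) < toLex (revMon b) ↔ toColex a < toColex b := by
  have hrev (m : Mon n) (i : Fin n) : revMon m i = m i.rev := by
    simp [revMon, equivMapDomain_apply]
  rw [Lex.lt_iff, Colex.lt_iff]
  constructor
  · rintro ⟨i, hi, hlt⟩
    refine ⟨i.rev, fun j hj => ?_, by simpa [hrev] using hlt⟩
    simpa [hrev] using hi j.rev (Fin.rev_lt_iff.2 hj)
  · rintro ⟨i, hi, hlt⟩
    refine ⟨i.rev, fun j hj => ?_, by simpa [hrev] using hlt⟩
    simpa [hrev] using hi j.rev (Fin.lt_rev_iff.2 hj)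

theorem toLex_lt_of_apply_zero_lt [NeZero n] {a b : Mon n} (h : a 0 < b 0) :
    toLex a < toLex b :=
  Lex.lt_iff.2 ⟨0, fun i hi => absurd hi (Fin.zero_le i).not_gt, h⟩

theorem toLex_le_iff_exists_apply_ne_zero {p q : Fin n} (hpq : p < q) (hq : ∀ i, i ≤ q)
    {d : ℕ} {m : Mon n} (hm : monDeg m = d) :
    toLex (single p 1 + single q (d - 1)) ≤ toLex m ↔ ∃ i ≤ p, m i ≠ 0 := by
  set v := single p 1 + single q (d - 1) with hv
  constructor
  · intro hle
    by_contra! h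
    refine hle.not_gt (Lex.lt_iff.2 ⟨p, fun i hi => ?_, ?_⟩)
    · simp [v, h i hi.le, hi.ne, (hi.trans hpq).ne]
    · simp [v, h p le_rfl, hpq.ne']
  · rintro ⟨i, hip, hi⟩
    by_contra! hlt
    obtain ⟨j, hj, hmj⟩ := Lex.lt_iff.1 hlt
    change ∀ k < j, m k = v k at hj
    change m j < v j at hmj
    rcases lt_trichotomy j p with hjp | rfl | hpj
    · simp [v, hjp.ne, (hjp.trans hpq).ne] at hmj
    · rcases hip.lt_or_eq with hij | rfl
      · exact hi (by simpa [v, hij.ne, (hij.trans hpq).ne] using hj i hij)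
      · exact hi (by simpa [v, hpq.ne] using hmj)
    rcases (hq j).lt_or_eq with hjq | rfl
    · simp [v, hpj.ne', hjq.ne] at hmj
    have hmq : m j < d - 1 := by simpa [v, hpj.ne'] using hmj
    have hdeg : monDeg m = monDeg v := by
      rw [hm, hv, monDeg_add, monDeg_single, monDeg_single]
      omega
    obtain ⟨k, hk⟩ := exists_lt_apply_of_monDeg_eq hdeg hmj
    rcases (hq k).lt_or_eq with hkj | rfl
    · exact (hj k hkj ▸ hk).false
    · exact hk.asymm hmj

variable [NeZero n]

theorem apply_eq_apply_of_toLex_le {u m : Mon n} {p : Fin n} (hu0 : u 0 = 1)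
    (hup : ∀ i, 0 < i → i ≤ p → u i = 0) (hm : toLex m ≤ toLex u) (hm0 : m 0 ≠ 0) :
    ∀ i ≤ p, m i = u i := by
  rcases hm.lt_or_eq with hlt | heq
  · obtain ⟨j, hj, hmj⟩ := Lex.lt_iff.1 hlt
    have hpj : p < j := by
      by_contra! hjp
      rcases (Fin.zero_le j).eq_or_lt with rfl | hj0
      · exact hm0 (by simpa [hu0] using hmj)
      · exact Nat.not_lt_zero _ (hup j hj0 hjp ▸ hmj)
    exact fun i hi => hj i (hi.trans_lt hpj)
  · exact fun i _ => by rw [toLex_inj.1 heq]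

variable {d : ℕ} {u v w z : Mon n}

theorem witness_of_not_dvd_of_not_dvd (hu0 : 0 < u 0) (hw : w ∈ lexSeg d u v)
    (hz : z ∈ lexSeg d u v) (hz0 : z 0 = 0) (hw0 : w 0 = 0) (hwz : toLex w < toLex z) :
    LinearQuotientWitness (lexSeg d u v) precNC z w := by
  obtain ⟨s, hsw, hs⟩ := Lex.lt_iff.1 hwz
  change ∀ k < s, w k = z k at hsw
  change w s < z s at hs
  obtain ⟨j, hj⟩ := exists_lt_apply_of_monDeg_eq (hw.1.trans hz.1.symm) hs
  have hsj : s < j := by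
    by_contra! hjs
    rcases hjs.lt_or_eq with hjs | rfl
    · exact (hsw j hjs ▸ hj).false
    · exact hs.asymm hj
  have hwj : w j ≠ 0 := by omega
  have hs0 : s ≠ 0 := by rintro rfl; omega
  have hj0 : j ≠ 0 := by rintro rfl; omega
  have hlt := (toLex_lt_exchange_iff hwj).2 hsj
  have h0 : (w - single j 1 + single s 1 : Mon n) 0 = 0 := by simp [hs0, hj0, hw0]
  refine ⟨s, hs, _, ⟨(monDeg_exchange hwj s).trans hw.1, hw.2.1.trans hlt.le, ?_⟩,
    Or.inr (Or.inl ⟨h0, hw0, hlt⟩), exchange_le w j s⟩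
  exact (toLex_lt_of_apply_zero_lt (h0 ▸ hu0)).le

section Ends

variable {p q : Fin n} (hu0 : u 0 = 1) (hup : ∀ i, 0 < i → i ≤ p → u i = 0) (hpq : p < q)
  (hq : ∀ i, i ≤ q)
include hu0 hup hpq hq

theorem witness_of_not_dvd_of_dvd (hw : w ∈ lexSeg d u (single p 1 + single q (d - 1)))
    (hz : z ∈ lexSeg d u (single p 1 + single q (d - 1))) (hz0 : z 0 = 0) (hw0 : 0 < w 0) :
    LinearQuotientWitness (lexSeg d u (single p 1 + single q (d - 1))) precNC z w := by
  have hwu := apply_eq_apply_of_toLex_le hu0 hup hw.2.2 hw0.ne'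
  obtain ⟨s, hsp, hzs⟩ := (toLex_le_iff_exists_apply_ne_zero hpq hq hz.1).1 hz.2.1
  have hs0 : 0 < s := Fin.pos_iff_ne_zero.2 (by rintro rfl; exact hzs hz0)
  have hws : w s = 0 := (hwu s hsp).trans (hup s hs0 hsp)
  have hdeg := (monDeg_exchange hw0.ne' s).trans hw.1
  have h0 : (w - single 0 1 + single s 1 : Mon n) 0 = 0 := by
    simp [hs0.ne, (hwu 0 (Fin.zero_le _)).trans hu0]
  refine ⟨s, by omega, _, ⟨hdeg, ?_, ?_⟩, Or.inl ⟨h0, hw0⟩, exchange_le w 0 s⟩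
  · exact (toLex_le_iff_exists_apply_ne_zero hpq hq hdeg).2 ⟨s, hsp, by simp⟩
  · exact (toLex_lt_of_apply_zero_lt (by rw [h0, hu0]; exact one_pos)).le

theorem witness_of_dvd_of_dvd (hw : w ∈ lexSeg d u (single p 1 + single q (d - 1)))
    (hz : z ∈ lexSeg d u (single p 1 + single q (d - 1))) (hz0 : 0 < z 0) (hw0 : 0 < w 0)
    (hwz : toColex w < toColex z) :
    LinearQuotientWitness (lexSeg d u (single p 1 + single q (d - 1))) precNC z w := by
  have hwz0 : w 0 = z 0 := by
    rw [apply_eq_apply_of_toLex_le hu0 hup hw.2.2 hw0.ne' 0 (Fin.zero_le _),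
      apply_eq_apply_of_toLex_le hu0 hup hz.2.2 hz0.ne' 0 (Fin.zero_le _)]
  obtain ⟨t, hwzt, ht⟩ := Colex.lt_iff.1 hwz
  change ∀ k, t < k → w k = z k at hwzt
  change w t < z t at ht
  obtain ⟨j, hj⟩ := exists_lt_apply_of_monDeg_eq (hw.1.trans hz.1.symm) ht
  have hjt : j < t := by
    by_contra! htj
    rcases htj.lt_or_eq with htj | rfl
    · exact (hwzt j htj ▸ hj).false
    · exact ht.asymm hj
  have hwj : w j ≠ 0 := by omega
  have hj0 : j ≠ 0 := by rintro rfl; omega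
  have hdeg := (monDeg_exchange hwj t).trans hw.1
  have h0 : 0 < (w - single j 1 + single t 1 : Mon n) 0 := by
    rw [Finsupp.add_apply, tsub_apply, single_eq_of_ne' hj0, tsub_zero]
    omega
  refine ⟨t, ht, _, ⟨hdeg, ?_, ?_⟩, Or.inr (Or.inr ⟨h0, hw0, ?_⟩), exchange_le w j t⟩
  · exact (toLex_le_iff_exists_apply_ne_zero hpq hq hdeg).2 ⟨0, Fin.zero_le _, h0.ne'⟩
  · exact ((toLex_exchange_lt_iff hwj).2 hjt).le.trans hw.2.2
  · exact toLex_revMon_lt_iff.2 ((toColex_lt_exchange_iff hwj).2 hjt)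

theorem witness_of_precNC (hw : w ∈ lexSeg d u (single p 1 + single q (d - 1)))
    (hz : z ∈ lexSeg d u (single p 1 + single q (d - 1))) (h : precNC z w) :
    LinearQuotientWitness (lexSeg d u (single p 1 + single q (d - 1))) precNC z w := by
  rcases h with ⟨hz0, hw0⟩ | ⟨hz0, hw0, hwz⟩ | ⟨hz0, hw0, hwz⟩
  · exact witness_of_not_dvd_of_dvd hu0 hup hpq hq hw hz hz0 hw0
  · exact witness_of_not_dvd_of_not_dvd (hu0 ▸ one_pos) hw hz hz0 hw0 hwz
  · exact witness_of_dvd_of_dvd hu0 hup hpq hq hw hz hz0 hw0 (toLex_revMon_lt_iff.1 hwz)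

end Ends

end LexSegment

/-- A non-completely lexsegment ideal with linear resolution, i.e. one with ends
`u = x_1 x_{l+1}^{a_{l+1}} ⋯ x_n^{a_n}` and `v = x_l x_n^{d-1}` for some `2 ≤ l ≤ n-1`,
has linear quotients with respect to the ordering `precNC` of its minimal generators. -/
theorem noncompletely_lexsegment_linear_quotients {n : ℕ} [NeZero n] (hn : 2 ≤ n)
    (k : Type*) [Field k] (d : ℕ) (l : ℕ) (hln : l ≤ n - 1)
    (u : Mon n) (hu0 : u 0 = 1)
    (huMid : ∀ i : Fin n, 1 ≤ i.val → i.val ≤ l - 1 → u i = 0) :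
    hasLinearQuotientsWrt k
      (lexSeg d u (Finsupp.single (⟨l - 1, by omega⟩ : Fin n) 1 +
        Finsupp.single (⟨n - 1, by omega⟩ : Fin n) (d - 1)))
      precNC := by
  refine LexSegment.hasLinearQuotientsWrt_of_witness k fun w hw z hz hzw =>
    LexSegment.witness_of_precNC hu0 huMid ?_ (fun i => ?_) hw hz hzw
  · exact Fin.mk_lt_mk.2 (by omega)
  · exact Nat.le_sub_one_of_lt i.isLt
end

section
/- Let u = x_1^{a_1}···x_n^{a_n} with a_1 > 1 and u ≠ x_1^d, and let v = x_q^{b_q}···x_n^{b_n} with 1 < q < n and b_q > 0, be monomials of degree d with u ≥_lex v, and let I = (L(u,v)). Then the minimal prime ideals of I are exactly (x_1, …, x_q) and (x_2, …, x_n). -/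
open MvPolynomial

/-!
Both primes contain `I`: a monomial of `L(u,v)` involving none of `x_1, …, x_q` is lex-below
`v`, and one involving none of `x_2, …, x_n` is `x_1^d`, which is lex-above `u`. Conversely
`L(u,v)` contains `x_i^d` for `2 ≤ i ≤ q` and `x_1 x_j^{d-1}` for every `j ≥ 2`, so a prime over
`I` that misses some `x_j` with `j ≥ 2` contains `x_1, …, x_q`. Hence every prime over `I`
contains one of the two incomparable primes `(x_1, …, x_q)` and `(x_2, …, x_n)`.
-/

namespace Ideal

theorem minimalPrimes_eq_of_isAntichain {R : Type*} [CommSemiring R] {I : Ideal R}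
    {S : Set (Ideal R)} (hS : ∀ P ∈ S, P.IsPrime ∧ I ≤ P) (hanti : IsAntichain (· ≤ ·) S)
    (hcover : ∀ J : Ideal R, J.IsPrime → I ≤ J → ∃ P ∈ S, P ≤ J) :
    I.minimalPrimes = S := by
  ext P
  constructor
  · rintro ⟨hPI, hmin⟩
    obtain ⟨Q, hQS, hQP⟩ := hcover P hPI.1 hPI.2
    rwa [le_antisymm (hmin (hS Q hQS) hQP) hQP]
  · intro hPS
    refine ⟨hS P hPS, fun J hJ hJP => ?_⟩
    obtain ⟨Q, hQS, hQJ⟩ := hcover J hJ.1 hJ.2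
    rwa [hanti.eq hQS hPS (hQJ.trans hJP)] at hQJ

end Ideal

namespace MvPolynomial

variable {σ R : Type*} [CommRing R]

open Classical in
noncomputable def killVars (V : Set σ) : MvPolynomial σ R →ₐ[R] MvPolynomial σ R :=
  aeval fun i => if i ∈ V then 0 else X i

theorem sub_killVars_mem_span_X_image (V : Set σ) (p : MvPolynomial σ R) :
    p - killVars V p ∈ Ideal.span (X '' V) := by
  classical
  induction p using MvPolynomial.induction_on with
  | C a => simp [killVars]
  | add p q hp hq => simpa [sub_add_sub_comm] using Ideal.add_mem _ hp hq
  | mul_X p i hp =>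
    by_cases hi : i ∈ V
    · simpa [killVars, hi] using
        Ideal.mul_mem_left _ p (Ideal.subset_span (Set.mem_image_of_mem X hi))
    · simpa [killVars, hi, ← sub_mul] using Ideal.mul_mem_right (X i) _ hp

theorem ker_killVars (V : Set σ) :
    RingHom.ker (killVars V : MvPolynomial σ R →ₐ[R] MvPolynomial σ R) =
      Ideal.span (X '' V) := by
  classical
  refine le_antisymm (fun p hp => ?_) ?_
  · simpa [(RingHom.mem_ker).1 hp] using sub_killVars_mem_span_X_image V p
  · rw [Ideal.span_le]
    rintro _ ⟨i, hi, rfl⟩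
    simp [killVars, hi]

theorem isPrime_span_X_image [IsDomain R] (V : Set σ) :
    (Ideal.span (X '' V : Set (MvPolynomial σ R))).IsPrime := by
  rw [← ker_killVars]
  exact RingHom.ker_isPrime _

theorem monomial_one_mem_span_X_image_iff [Nontrivial R] {V : Set σ} {m : σ →₀ ℕ} :
    monomial m (1 : R) ∈ Ideal.span (X '' V) ↔ ∃ i ∈ V, m i ≠ 0 := by
  classical
  simp [mem_ideal_span_X_image, support_monomial]

theorem X_mem_span_X_image_iff [Nontrivial R] {V : Set σ} {j : σ} :
    (X j : MvPolynomial σ R) ∈ Ideal.span (X '' V) ↔ j ∈ V := by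
  classical
  simp [X, monomial_one_mem_span_X_image_iff, Finsupp.single_apply]

theorem span_X_image_le_span_X_image_iff [Nontrivial R] {V W : Set σ} :
    Ideal.span (X '' V : Set (MvPolynomial σ R)) ≤ Ideal.span (X '' W) ↔ V ⊆ W := by
  simp [Ideal.span_le, Set.subset_def, X_mem_span_X_image_iff]

end MvPolynomial

section Lex

variable {n : ℕ}

theorem monDeg_eq_degree (m : Mon n) : monDeg m = m.degree :=
  (Finsupp.degree_eq_sum m).symm

theorem apply_le_monDeg (m : Mon n) (i : Fin n) : m i ≤ monDeg m :=
  Finset.single_le_sum (fun j _ => Nat.zero_le (m j)) (Finset.mem_univ i)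

theorem eq_single_of_apply_eq_monDeg {m : Mon n} {i : Fin n} (h : m i = monDeg m) :
    m = Finsupp.single i (monDeg m) := by
  classical
  have hrest : ∑ j ∈ Finset.univ.erase i, m j = 0 := by
    have := Finset.add_sum_erase Finset.univ m (Finset.mem_univ i)
    rw [monDeg] at h
    omega
  rw [Finsupp.eq_single_iff]
  refine ⟨fun j hj => ?_, h⟩
  by_contra hji
  rw [Finset.mem_singleton] at hji
  exact Finsupp.mem_support_iff.1 hj <|
    Finset.sum_eq_zero_iff.1 hrest j (Finset.mem_erase.2 ⟨hji, Finset.mem_univ j⟩)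

theorem toLex_le_toLex_single_monDeg {m : Mon n} {i : Fin n} (h : ∀ j < i, m j = 0) :
    toLex m ≤ toLex (Finsupp.single i (monDeg m)) := by
  rcases (apply_le_monDeg m i).lt_or_eq with hlt | heq
  · refine (Finsupp.Lex.lt_iff.2 ⟨i, fun j hj => ?_, ?_⟩).le
    · simp [h j hj, hj.ne']
    · simpa using hlt
  · rw [← eq_single_of_apply_eq_monDeg heq]

theorem toLex_lt_toLex_of_apply_zero_lt [NeZero n] {m m' : Mon n} (h : m 0 < m' 0) :
    toLex m < toLex m' :=
  Finsupp.Lex.lt_iff.2 ⟨0, fun j hj => absurd hj (Fin.zero_le j).not_gt, h⟩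

end Lex

section LexSeg

variable {n : ℕ} {k : Type*} [Field k] {d q : ℕ} {u v w : Mon n}

theorem monomialIdeal_le_span_X_image_iff {T : Set (Mon n)} {V : Set (Fin n)} :
    monomialIdeal k T ≤ Ideal.span (X '' V) ↔ ∀ m ∈ T, ∃ i ∈ V, m i ≠ 0 := by
  simp [monomialIdeal, Ideal.span_le, Set.subset_def, monomial_one_mem_span_X_image_iff]

theorem exists_le_and_apply_ne_zero_of_toLex_le (hvw : toLex v ≤ toLex w) {j : Fin n}
    (hvj : 0 < v j) (hvlow : ∀ i < j, v i = 0) : ∃ i ≤ j, w i ≠ 0 := by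
  by_contra! hw
  refine (Finsupp.Lex.lt_iff.2 ⟨j, fun i hi => ?_, ?_⟩).not_ge hvw
  · simp [hvlow i hi, hw i hi.le]
  · simpa [hw j le_rfl] using hvj

theorem monomialIdeal_lexSeg_le_span_X_lt (hq1 : 1 < q) (hqn : q < n)
    (hbq : 0 < v ⟨q - 1, by omega⟩) (hvlow : ∀ i : Fin n, i.val < q - 1 → v i = 0) :
    monomialIdeal k (lexSeg d u v) ≤ Ideal.span (X '' {i : Fin n | i.val < q}) := by
  refine monomialIdeal_le_span_X_image_iff.2 fun w hw => ?_
  obtain ⟨i, hi, hwi⟩ := exists_le_and_apply_ne_zero_of_toLex_le hw.2.1 hbq fun i hi => hvlow i hi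
  exact ⟨i, by simp [Fin.le_def] at hi ⊢; omega, hwi⟩

variable [NeZero n]

theorem exists_ne_zero_and_apply_ne_zero_of_toLex_le (hwu : toLex w ≤ toLex u)
    (hdeg : monDeg w = monDeg u) (hune : u ≠ Finsupp.single 0 (monDeg u)) :
    ∃ i ≠ 0, w i ≠ 0 := by
  by_contra! hw
  have hw0 : w 0 = monDeg w :=
    (Finset.sum_eq_single 0 (fun j _ hj => hw j hj) (by simp)).symm
  have hwu' : toLex u ≤ toLex w := by
    rw [eq_single_of_apply_eq_monDeg hw0, hdeg]
    exact toLex_le_toLex_single_monDeg fun j hj => absurd hj (Fin.zero_le j).not_gt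
  refine hune ?_
  rw [← hdeg, ← eq_single_of_apply_eq_monDeg hw0]
  exact toLex.injective (le_antisymm hwu' hwu)

theorem monomialIdeal_lexSeg_le_span_X_pos (hu : monDeg u = d)
    (hune : u ≠ Finsupp.single 0 d) :
    monomialIdeal k (lexSeg d u v) ≤ Ideal.span (X '' {i : Fin n | 0 < i.val}) := by
  refine monomialIdeal_le_span_X_image_iff.2 fun w hw => ?_
  obtain ⟨i, hi, hwi⟩ :=
    exists_ne_zero_and_apply_ne_zero_of_toLex_le hw.2.2 (hw.1.trans hu.symm) (hu ▸ hune)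
  exact ⟨i, Nat.pos_of_ne_zero (Fin.val_ne_zero_iff.2 hi), hwi⟩

theorem single_mem_lexSeg (hv : monDeg v = d) (ha1 : 1 < u 0) {i : Fin n} (hi0 : i ≠ 0)
    (hvi : ∀ j < i, v j = 0) : Finsupp.single i d ∈ lexSeg d u v := by
  refine ⟨by simp [monDeg_eq_degree], ?_, ?_⟩
  · exact hv ▸ toLex_le_toLex_single_monDeg hvi
  · refine (toLex_lt_toLex_of_apply_zero_lt ?_).le
    simpa [Finsupp.single_apply, hi0] using one_pos.trans ha1

theorem single_zero_add_single_mem_lexSeg (hd : 1 ≤ d) (ha1 : 1 < u 0) (hv0 : v 0 = 0)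
    {j : Fin n} (hj0 : j ≠ 0) :
    Finsupp.single 0 1 + Finsupp.single j (d - 1) ∈ lexSeg d u v := by
  have hw0 : (Finsupp.single 0 1 + Finsupp.single j (d - 1) : Mon n) 0 = 1 := by
    simp [hj0.symm]
  refine ⟨?_, (toLex_lt_toLex_of_apply_zero_lt ?_).le, (toLex_lt_toLex_of_apply_zero_lt ?_).le⟩
  · rw [monDeg_eq_degree, map_add, Finsupp.degree_single, Finsupp.degree_single]
    omega
  · rw [hw0, hv0]; exact one_pos
  · rwa [hw0]

theorem span_X_lt_le_or_span_X_pos_le (hd : 1 ≤ d) (hq1 : 1 < q) (hv : monDeg v = d)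
    (ha1 : 1 < u 0) (hvlow : ∀ i : Fin n, i.val < q - 1 → v i = 0)
    {P : Ideal (MvPolynomial (Fin n) k)} (hP : P.IsPrime) (hIP : monomialIdeal k (lexSeg d u v) ≤ P) :
    Ideal.span (X '' {i : Fin n | i.val < q}) ≤ P ∨
      Ideal.span (X '' {i : Fin n | 0 < i.val}) ≤ P := by
  have hmem : ∀ w ∈ lexSeg d u v, monomial w (1 : k) ∈ P := fun w hw =>
    hIP (Ideal.subset_span ⟨w, hw, rfl⟩)
  rw [Ideal.span_le, Ideal.span_le]
  refine or_iff_not_imp_right.2 fun hP2 => ?_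
  obtain ⟨_, ⟨j, hj, rfl⟩, hjP⟩ := Set.not_subset.1 hP2
  have hj0 : j ≠ 0 := fun h => by simp [h] at hj
  rintro _ ⟨i, hi, rfl⟩
  rcases eq_or_ne i 0 with rfl | hi0
  · have hv0 : v 0 = 0 := hvlow 0 (by simp; omega)
    have hmix := hmem _ (single_zero_add_single_mem_lexSeg hd ha1 hv0 hj0)
    rw [monomial_single_add, ← X_pow_eq_monomial, pow_one] at hmix
    exact (hP.mem_or_mem hmix).resolve_right fun h => hjP (hP.mem_of_pow_mem _ h)
  · have hvi : ∀ j < i, v j = 0 := fun j hj =>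
      hvlow j (by have : i.val < q := hi; have := Fin.lt_def.1 hj; omega)
    have hpow := hmem _ (single_mem_lexSeg hv ha1 hi0 hvi)
    rw [← X_pow_eq_monomial] at hpow
    exact hP.mem_of_pow_mem d hpow

end LexSeg

/-- For a lexsegment ideal `I = (L(u,v))` with `u = x_1^{a_1} ⋯ x_n^{a_n}`, `a_1 > 1`,
`u ≠ x_1^d`, and `v = x_q^{b_q} ⋯ x_n^{b_n}` with `1 < q < n`, `b_q > 0`, the minimal primes
of `I` are exactly `(x_1, …, x_q)` and `(x_2, …, x_n)`. -/
theorem minimalPrimes_lexsegment {n : ℕ} [NeZero n] (k : Type*) [Field k]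
    (d : ℕ) (q : ℕ) (hq1 : 1 < q) (hqn : q < n)
    (u v : Mon n) (hu : monDeg u = d) (hv : monDeg v = d)
    (ha1 : 1 < u 0) (hune : u ≠ Finsupp.single 0 d)
    (hbq : 0 < v ⟨q - 1, by omega⟩)
    (hvlow : ∀ i : Fin n, i.val < q - 1 → v i = 0) :
    (monomialIdeal k (lexSeg d u v)).minimalPrimes =
      {Ideal.span ((fun i => (X i : MvPolynomial (Fin n) k)) '' {i : Fin n | i.val < q}),
       Ideal.span ((fun i => (X i : MvPolynomial (Fin n) k)) '' {i : Fin n | 0 < i.val})} := by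
  have hd : 1 ≤ d := hu ▸ ha1.le.trans (apply_le_monDeg u 0)
  refine Ideal.minimalPrimes_eq_of_isAntichain ?_ ?_ fun J hJ hIJ => ?_
  · rintro _ (rfl | rfl)
    exacts [⟨isPrime_span_X_image _, monomialIdeal_lexSeg_le_span_X_lt hq1 hqn hbq hvlow⟩,
      ⟨isPrime_span_X_image _, monomialIdeal_lexSeg_le_span_X_pos hu hune⟩]
  · refine isAntichain_insert.2 ⟨Set.subsingleton_singleton.isAntichain _, ?_⟩
    rintro _ rfl -
    simp only [span_X_image_le_span_X_image_iff, Set.not_subset]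
    refine ⟨⟨0, ?_, by simp⟩, ⟨⟨n - 1, by omega⟩, ?_, ?_⟩⟩ <;>
      simp only [Set.mem_ofPred_eq, Fin.val_zero n, not_lt] <;> omega
  · rcases span_X_lt_le_or_span_X_pos_le hd hq1 hv ha1 hvlow hJ hIJ with h | h
    exacts [⟨_, Or.inl rfl, h⟩, ⟨_, Or.inr rfl, h⟩]
end
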